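/- Let A, B, C, X, Y be finite abelian groups. If A ⊕ B ≅ X ⊕ X and B ⊕ C ≅ Y ⊕ Y, then there exists a finite abelian group P such that A ⊕ C ≅ P ⊕ P. -/
import Mathlib

private noncomputable def tc (G : Type*) [AddCommGroup G] (n : ℕ) : ℕ :=
  Nat.card {x : G // n • x = 0}

private lemma tc_pos (G : Type*) [AddCommGroup G] [Finite G] (n : ℕ) : 0 < tc G n := by
  have : Nonempty {x : G // n • x = 0} := ⟨0, smul_zero n⟩
  exact Nat.card_pos

private lemma tc_congr {G H : Type*} [AddCommGroup G] [AddCommGroup H] (e : G ≃+ H) (n : ℕ) :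
    tc G n = tc H n := by
  refine Nat.card_congr (Equiv.subtypeEquiv e.toEquiv fun a => ?_)
  constructor
  · intro h; show n • e a = 0; rw [← map_nsmul, h, map_zero]
  · intro h; have : e (n • a) = e 0 := by rw [map_nsmul, map_zero]; exact h
    exact e.injective this

private lemma tc_prod (G H : Type*) [AddCommGroup G] [AddCommGroup H] (n : ℕ) :
    tc (G × H) n = tc G n * tc H n := by
  rw [tc, tc, tc, ← Nat.card_prod]
  refine Nat.card_congr ⟨fun x => (⟨x.1.1, congrArg Prod.fst x.2⟩, ⟨x.1.2, congrArg Prod.snd x.2⟩),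
    fun y => ⟨(y.1.1, y.2.1), Prod.ext y.1.2 y.2.2⟩, fun x => rfl, fun y => rfl⟩

private lemma tc_pi {ι : Type} [Fintype ι] (f : ι → Type) [∀ i, AddCommGroup (f i)] (n : ℕ) :
    tc (∀ i, f i) n = ∏ i, tc (f i) n := by
  simp only [tc]
  rw [← Nat.card_pi]
  exact Nat.card_congr ⟨fun x i => ⟨x.1 i, congrFun x.2 i⟩,
    fun y => ⟨fun i => (y i).1, funext fun i => (y i).2⟩, fun x => rfl, fun y => rfl⟩

private def psi (m n : ℕ) : ZMod m →+ ZMod m :=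
  AddMonoidHom.mk' (fun x => n • x) (fun a b => smul_add n a b)

private lemma tc_zmod (m n : ℕ) (hm : m ≠ 0) : tc (ZMod m) n = m.gcd n := by
  haveI : NeZero m := ⟨hm⟩
  have h1 : tc (ZMod m) n = Nat.card (psi m n).ker :=
    Nat.card_congr (Equiv.subtypeEquivRight fun x => Iff.rfl)
  have hrange : (psi m n).range = AddSubgroup.zmultiples ((n : ZMod m)) := by
    ext x
    simp only [AddMonoidHom.mem_range, AddSubgroup.mem_zmultiples_iff, psi,
      AddMonoidHom.mk'_apply]
    constructor
    · rintro ⟨y, rfl⟩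
      refine ⟨(y.val : ℤ), ?_⟩
      rw [nsmul_eq_mul, zsmul_eq_mul, mul_comm]
      push_cast
      rw [ZMod.natCast_val, ZMod.cast_id]
    · rintro ⟨k, rfl⟩
      refine ⟨(k : ZMod m), ?_⟩
      rw [nsmul_eq_mul, zsmul_eq_mul, mul_comm]
  have hidx : (psi m n).ker.index = m / m.gcd n := by
    rw [AddSubgroup.index_ker, hrange, Nat.card_zmultiples, ZMod.addOrderOf_coe n hm]
  have hcard := AddSubgroup.card_mul_index (psi m n).ker
  rw [hidx, Nat.card_zmod] at hcard
  have hgcdpos : 0 < m.gcd n := Nat.gcd_pos_of_pos_left n (Nat.pos_of_ne_zero hm)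
  have hdvd : m.gcd n ∣ m := Nat.gcd_dvd_left m n
  have hbpos : 0 < m / m.gcd n := Nat.div_pos (Nat.le_of_dvd (Nat.pos_of_ne_zero hm) hdvd) hgcdpos
  rw [h1]
  have h2 : Nat.card (psi m n).ker = m / (m / m.gcd n) := by
    conv_lhs => rw [← Nat.mul_div_cancel (Nat.card (psi m n).ker) hbpos, hcard]
  rw [h2, Nat.div_div_self hdvd hm]

open Finset

private lemma parity_step {ι : Type} [Fintype ι] (w : ι → ℕ) (k : ℕ) :
    ∑ i, min (w i) (k+1) = ∑ i, min (w i) k + (univ.filter (fun i => k+1 ≤ w i)).card := by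
  rw [card_filter, ← Finset.sum_add_distrib]
  refine Finset.sum_congr rfl fun i _ => ?_
  split_ifs with h <;> omega

private lemma parity_fibers {ι : Type} [Fintype ι] (w : ι → ℕ)
    (h : ∀ k, Even (∑ i, min (w i) k)) {k : ℕ} (hk : k ≠ 0) :
    Even (univ.filter (fun i => w i = k)).card := by
  have hr : ∀ k, Even ((univ.filter (fun i => k+1 ≤ w i)).card) := by
    intro k
    have h1 := h k
    have h2 := h (k+1)
    rw [parity_step w k] at h2
    rw [Nat.even_iff] at *
    omega
  have hsplit : ∀ k, (univ.filter (fun i => k+1 ≤ w i)).card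
      = (univ.filter (fun i => w i = k+1)).card + (univ.filter (fun i => k+1+1 ≤ w i)).card := by
    intro k
    rw [card_filter, card_filter, card_filter, ← Finset.sum_add_distrib]
    refine Finset.sum_congr rfl fun i _ => ?_
    split_ifs <;> omega
  obtain ⟨k, rfl⟩ := Nat.exists_eq_succ_of_ne_zero hk
  simp only [Nat.succ_eq_add_one]
  have h1 := hr k
  have h2 := hr (k+1)
  rw [hsplit k] at h1
  rw [Nat.even_iff] at *
  omega

private lemma exists_half {ι : Type} [Fintype ι] {α : Type} [DecidableEq α] (f : ι → α)
    (h : ∀ a, Even (univ.filter (fun i => f i = a)).card) :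
    ∃ (ι' : Type) (_ : Fintype ι') (g : ι' → α) (E : ι ≃ ι' × Bool),
      (∀ i, f i = g (E i).1) ∧ (∀ j, ∃ i, f i = g j) := by
  classical
  set m : α → ℕ := fun a => (univ.filter (fun i => f i = a)).card / 2 with hm
  have hcard : ∀ a : α, Fintype.card {i // f i = a} = m a * 2 := by
    intro a
    rw [Fintype.card_subtype]
    obtain ⟨r, hr⟩ := h a
    simp only [hm, hr]
    omega
  refine ⟨Σ a : ↥(univ.image f), Fin (m a.1), inferInstance, fun x => x.1.1, ?_, ?_, ?_⟩
  · -- the equiv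
    refine (Equiv.ofBijective (fun i => (⟨⟨f i, mem_image_of_mem f (mem_univ i)⟩,
        (⟨i, rfl⟩ : {j // f j = f i})⟩ : Σ a : ↥(univ.image f), {j // f j = a.1})) ?_).trans
      ((Equiv.sigmaCongrRight fun a : ↥(univ.image f) =>
        ((Fintype.equivFinOfCardEq (hcard a.1)).trans
          ((finProdFinEquiv).symm.trans (Equiv.prodCongr (Equiv.refl _) finTwoEquiv)))).trans
      (Equiv.sigmaProdDistrib _ _).symm)
    constructor
    · intro i j hij
      have := congrArg (fun x => (x.2 : ι)) hij
      exact this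
    · rintro ⟨⟨a, ha⟩, ⟨i, (hi : f i = a)⟩⟩
      exact ⟨i, by subst hi; rfl⟩
  · intro i
    rfl
  · rintro ⟨⟨a, ha⟩, x⟩
    obtain ⟨i, _, hi⟩ := Finset.mem_image.1 ha
    exact ⟨i, hi⟩

open DirectSum

private def zmodCongr {a b : ℕ} (h : a = b) : ZMod a ≃+ ZMod b := by
  subst h; exact AddEquiv.refl _

private def piBoolProd {κ : Type} (H : κ → Type) [∀ i, AddCommGroup (H i)] :
    (∀ j : κ × Bool, H j.1) ≃+ (∀ i, H i) × (∀ i, H i) where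
  toFun x := (fun i => x (i, false), fun i => x (i, true))
  invFun y j := match j with
    | (i, false) => y.1 i
    | (i, true) => y.2 i
  left_inv x := funext fun j => by rcases j with ⟨i, _ | _⟩ <;> rfl
  right_inv y := rfl
  map_add' x y := rfl

private def piSubtypeNeZero {ι : Type} [Fintype ι] (p e : ι → ℕ) :
    (∀ i, ZMod (p i ^ e i)) ≃+ (∀ i : {i // e i ≠ 0}, ZMod (p i.1 ^ e i.1)) where
  toFun x j := x j.1
  invFun y i := if h : e i ≠ 0 then y ⟨i, h⟩ else 0
  left_inv x := funext fun i => by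
    by_cases h : e i ≠ 0
    · simp [h]
    · simp only [dif_neg h]
      haveI : Subsingleton (ZMod (p i ^ e i)) := by
        rw [not_not.1 h, pow_zero]; infer_instance
      exact Subsingleton.elim _ _
  right_inv y := funext fun j => by simp [j.2]
  map_add' x y := rfl

private lemma decomp (G : Type) [AddCommGroup G] [Finite G] :
    ∃ (ι : Type) (_ : Fintype ι) (p e : ι → ℕ),
      (∀ i, (p i).Prime) ∧ (∀ i, e i ≠ 0) ∧ Nonempty (G ≃+ ∀ i, ZMod (p i ^ e i)) := by
  obtain ⟨ι, hι, p, hp, e, ⟨q⟩⟩ := AddCommGroup.equiv_directSum_zmod_of_finite G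
  classical
  have q2 : (⨁ i, ZMod (p i ^ e i)) ≃+ ∀ i, ZMod (p i ^ e i) :=
    AddEquiv.mk' DFinsupp.equivFunOnFintype (fun a b => rfl)
  exact ⟨{i // e i ≠ 0}, inferInstance, fun j => p j.1, fun j => e j.1,
    fun j => hp j.1, fun j => j.2,
    ⟨(q.trans q2).trans (piSubtypeNeZero p e)⟩⟩

private lemma tc_factorization {ι : Type} [Fintype ι] (p e : ι → ℕ) (hp : ∀ i, (p i).Prime)
    {G : Type} [AddCommGroup G] (d : G ≃+ ∀ i, ZMod (p i ^ e i)) (q k : ℕ) (hq : q.Prime) :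
    (tc G (q ^ k)).factorization q = ∑ i, min ((p i ^ e i).factorization q) k := by
  have hpos : ∀ i, p i ^ e i ≠ 0 := fun i => pow_ne_zero _ (hp i).pos.ne'
  rw [tc_congr d, tc_pi]
  have h1 : ∀ i : ι, tc (ZMod (p i ^ e i)) (q ^ k) = (p i ^ e i).gcd (q ^ k) :=
    fun i => tc_zmod _ _ (hpos i)
  rw [Finset.prod_congr rfl (fun i _ => h1 i)]
  rw [Nat.factorization_prod
    (fun i _ => (Nat.gcd_pos_of_pos_left (q ^ k) (Nat.pos_of_ne_zero (hpos i))).ne')]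
  rw [Finsupp.finset_sum_apply]
  refine Finset.sum_congr rfl fun i _ => ?_
  rw [Nat.factorization_gcd (hpos i) (pow_ne_zero _ hq.pos.ne'), Finsupp.inf_apply,
    hq.factorization_pow, Finsupp.single_eq_same]


/-- Fact 6.1: If `A ⊕ B ≅ X ⊕ X` and `B ⊕ C ≅ Y ⊕ Y` for finite abelian groups,
then `A ⊕ C ≅ P ⊕ P` for some finite abelian group `P`. -/
theorem stmt_0 (A B C X Y : Type) [AddCommGroup A] [AddCommGroup B] [AddCommGroup C]
    [AddCommGroup X] [AddCommGroup Y] [Finite A] [Finite B] [Finite C] [Finite X] [Finite Y]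
    (h1 : Nonempty ((A × B) ≃+ (X × X))) (h2 : Nonempty ((B × C) ≃+ (Y × Y))) :
    ∃ (P : Type) (_ : AddCommGroup P) (_ : Finite P), Nonempty ((A × C) ≃+ (P × P)) := by
  obtain ⟨e1⟩ := h1
  obtain ⟨e2⟩ := h2
  have big : (A × C) × (B × B) ≃+ (X × Y) × (X × Y) :=
    (AddEquiv.prodProdProdComm A C B B).trans <|
      (e1.prodCongr ((AddEquiv.prodComm : C × B ≃+ B × C).trans e2)).trans (AddEquiv.prodProdProdComm X X Y Y)
  have hrel : ∀ n, tc (A × C) n * (tc B n * tc B n) = tc (X × Y) n * tc (X × Y) n := by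
    intro n
    have := tc_congr big n
    rwa [tc_prod (A × C) (B × B), tc_prod B B, tc_prod (X × Y) (X × Y)] at this
  obtain ⟨ιG, _, pG, eG, hpG, heG, ⟨dG⟩⟩ := decomp (A × C)
  obtain ⟨ιB, _, pB, eB, hpB, heB, ⟨dB⟩⟩ := decomp B
  obtain ⟨ιQ, _, pQ, eQ, hpQ, heQ, ⟨dQ⟩⟩ := decomp (X × Y)
  -- parity of valuations
  have hEvenVal : ∀ q, ∀ k, Even ((tc (A × C) (q ^ k)).factorization q) := by
    intro q k
    have hG := tc_pos (A × C) (q ^ k)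
    have hB := tc_pos B (q ^ k)
    have hQ := tc_pos (X × Y) (q ^ k)
    have h := hrel (q ^ k)
    have := congrArg (fun t => t.factorization q) h
    simp only [Nat.factorization_mul hG.ne' (Nat.mul_pos hB hB).ne',
      Nat.factorization_mul hB.ne' hB.ne', Nat.factorization_mul hQ.ne' hQ.ne',
      Finsupp.add_apply] at this
    rw [Nat.even_iff]
    omega
  -- even fibers
  classical
  have hfib : ∀ v : ℕ × ℕ, Even ((Finset.univ.filter
      (fun i : ιG => (pG i, eG i) = v)).card) := by
    rintro ⟨q, k⟩
    by_cases hk : k = 0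
    · have : (Finset.univ.filter (fun i : ιG => (pG i, eG i) = (q, k))) = ∅ := by
        refine Finset.filter_eq_empty_iff.2 fun i _ => ?_
        simp only [Prod.mk.injEq, not_and]
        intro _ h
        exact heG i (h.trans hk)
      rw [this]; simp
    by_cases hq : q.Prime
    · have hEvenSum : ∀ k', Even (∑ i, min ((pG i ^ eG i).factorization q) k') := by
        intro k'
        have := hEvenVal q k'
        rwa [tc_factorization pG eG hpG dG q k' hq] at this
      have heven := parity_fibers _ hEvenSum hk
      have hsame : (Finset.univ.filter (fun i : ιG => (pG i, eG i) = (q, k)))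
          = (Finset.univ.filter (fun i : ιG => (pG i ^ eG i).factorization q = k)) := by
        refine Finset.filter_congr fun i _ => ?_
        rw [(hpG i).factorization_pow, Finsupp.single_apply, Prod.mk.injEq]
        constructor
        · rintro ⟨rfl, rfl⟩; simp
        · intro h
          split_ifs at h with hpq
          · exact ⟨hpq, h⟩
          · exact absurd h.symm hk
      rw [hsame]
      exact heven
    · have : (Finset.univ.filter (fun i : ιG => (pG i, eG i) = (q, k))) = ∅ := by
        refine Finset.filter_eq_empty_iff.2 fun i _ => ?_
        simp only [Prod.mk.injEq, not_and]
        rintro rfl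
        exact absurd (hpG i) hq
      rw [this]; simp
  obtain ⟨ι', _, g, E, hE, hg⟩ := exists_half (fun i : ιG => (pG i, eG i)) hfib
  haveI : ∀ j : ι', NeZero ((g j).1 ^ (g j).2) := by
    intro j
    obtain ⟨i, hi⟩ := hg j
    have : (g j).1 = pG i := by rw [← hi]
    rw [this]
    exact ⟨pow_ne_zero _ (hpG i).pos.ne'⟩
  refine ⟨∀ j : ι', ZMod ((g j).1 ^ (g j).2), inferInstance, inferInstance, ⟨?_⟩⟩
  have step1 : (A × C) ≃+ ∀ j : ι' × Bool, ZMod (pG (E.symm j) ^ eG (E.symm j)) :=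
    dG.trans (AddEquiv.mk' (Equiv.piCongrLeft' (fun i => ZMod (pG i ^ eG i)) E)
      (fun a b => rfl))
  have hcongr : ∀ j : ι' × Bool, pG (E.symm j) ^ eG (E.symm j) = (g j.1).1 ^ (g j.1).2 := by
    intro j
    have h' := hE (E.symm j)
    rw [E.apply_symm_apply] at h'
    rw [show pG (E.symm j) = (g j.1).1 from congrArg Prod.fst h',
      show eG (E.symm j) = (g j.1).2 from congrArg Prod.snd h']
  exact (step1.trans (AddEquiv.piCongrRight fun j => zmodCongr (hcongr j))).trans
    (piBoolProd (fun i : ι' => ZMod ((g i).1 ^ (g i).2)))
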